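/- arXiv:1803.07961 — 3 statements merged into one kernel-verified Lean document; each statement's English description precedes it below -/
import Mathlib

section
/- The heterogeneous modularity with L = 2 node types satisfies −1 ≤ Q(𝓑,𝓖) ≤ 1, where Q = (1/4)[ (1/(2m¹)) tr(B¹ᵀ M¹ B¹) + (2/m¹²) tr(B¹ᵀ M¹² B²) + (1/(2m²)) tr(B²ᵀ M² B²) ], with M¹ = A¹ − d¹ (d¹)ᵀ/(2m¹), M² = A² − d² (d²)ᵀ/(2m²), M¹² = A¹² − d¹² (d²¹)ᵀ/m¹². -/
lemma trace_assign {n₁ n₂ K : ℕ} (M : Matrix (Fin n₁) (Fin n₂) ℝ)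
    (e₁ : Fin n₁ → Fin K) (e₂ : Fin n₂ → Fin K)
    (B₁ : Matrix (Fin n₁) (Fin K) ℝ) (B₂ : Matrix (Fin n₂) (Fin K) ℝ)
    (hB₁ : ∀ i k, B₁ i k = if e₁ i = k then 1 else 0)
    (hB₂ : ∀ j k, B₂ j k = if e₂ j = k then 1 else 0) :
    Matrix.trace (B₁.transpose * M * B₂) =
      ∑ i, ∑ j, (if e₁ i = e₂ j then M i j else 0) := by
  rw [Matrix.trace_mul_comm (B₁.transpose * M) B₂, ← Matrix.mul_assoc]
  have hBB : ∀ (j : Fin n₂) (i : Fin n₁),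
      (B₂ * B₁.transpose) j i = if e₁ i = e₂ j then (1:ℝ) else 0 := by
    intro j i
    simp only [Matrix.mul_apply, Matrix.transpose_apply, hB₁, hB₂, ite_mul, one_mul, zero_mul]
    rw [Finset.sum_ite_eq Finset.univ (e₂ j) (fun k => if e₁ i = k then (1:ℝ) else 0)]
    simp
  simp only [Matrix.trace, Matrix.diag, Matrix.mul_apply, hBB]
  rw [Finset.sum_comm]
  refine Finset.sum_congr rfl fun i _ => Finset.sum_congr rfl fun j _ => ?_
  split <;> simp

lemma mod_bound {α β : Type*} [Fintype α] [Fintype β]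
    (A : Matrix α β ℝ) (hA : ∀ i j, 0 ≤ A i j) (s : ℝ) (hs : 0 < s)
    (hsum : ∑ i, ∑ j, A i j = s)
    (P : α → β → Prop) [∀ i j, Decidable (P i j)] :
    -s ≤ (∑ i, ∑ j, (if P i j then A i j - (∑ k, A i k) * (∑ k, A k j) / s else 0)) ∧
    (∑ i, ∑ j, (if P i j then A i j - (∑ k, A i k) * (∑ k, A k j) / s else 0)) ≤ s := by
  have hsplit : ∀ i j, (if P i j then A i j - (∑ k, A i k) * (∑ k, A k j) / s else 0)
      = (if P i j then A i j else 0) - (if P i j then (∑ k, A i k) * (∑ k, A k j) / s else 0) := by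
    intro i j; split <;> simp
  simp only [hsplit, Finset.sum_sub_distrib]
  have h1 : (0:ℝ) ≤ ∑ i, ∑ j, (if P i j then A i j else 0) :=
    Finset.sum_nonneg fun i _ => Finset.sum_nonneg fun j _ => by split <;> simp [hA]
  have h2 : (∑ i, ∑ j, (if P i j then A i j else 0)) ≤ ∑ i, ∑ j, A i j :=
    Finset.sum_le_sum fun i _ => Finset.sum_le_sum fun j _ => by split <;> simp [hA]
  have h3 : (0:ℝ) ≤ ∑ i, ∑ j, (if P i j then (∑ k, A i k) * (∑ k, A k j) / s else 0) :=
    Finset.sum_nonneg fun i _ => Finset.sum_nonneg fun j _ => by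
      split
      · exact div_nonneg (mul_nonneg (Finset.sum_nonneg fun k _ => hA i k)
          (Finset.sum_nonneg fun k _ => hA k j)) hs.le
      · exact le_rfl
  have h4 : (∑ i, ∑ j, (if P i j then (∑ k, A i k) * (∑ k, A k j) / s else 0))
      ≤ ∑ i, ∑ j, (∑ k, A i k) * (∑ k, A k j) / s :=
    Finset.sum_le_sum fun i _ => Finset.sum_le_sum fun j _ => by
      split
      · exact le_rfl
      · exact div_nonneg (mul_nonneg (Finset.sum_nonneg fun k _ => hA i k)
          (Finset.sum_nonneg fun k _ => hA k j)) hs.le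
  have h5 : (∑ i, ∑ j, (∑ k, A i k) * (∑ k, A k j) / s) = s := by
    have hc : (∑ j, ∑ k, A k j) = s := Finset.sum_comm.trans hsum
    have key : (∑ i, ∑ j, (∑ k, A i k) * (∑ k, A k j) / s)
        = ((∑ i, ∑ k, A i k) * (∑ j, ∑ k, A k j)) / s := by
      rw [Finset.sum_mul_sum, Finset.sum_div]
      exact Finset.sum_congr rfl fun i _ => by rw [Finset.sum_div]
    rw [key, hsum, hc]; field_simp
  constructor <;> linarith

/-- The heterogeneous modularity with L = 2 node types lies in [-1, 1]. -/
theorem heterogeneous_modularity_bounds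
    (n₁ n₂ K : ℕ)
    (A₁ : Matrix (Fin n₁) (Fin n₁) ℝ) (A₂ : Matrix (Fin n₂) (Fin n₂) ℝ)
    (A₁₂ : Matrix (Fin n₁) (Fin n₂) ℝ)
    (hsym₁ : ∀ i j, A₁ i j = A₁ j i) (hsym₂ : ∀ i j, A₂ i j = A₂ j i)
    (h01₁ : ∀ i j, A₁ i j = 0 ∨ A₁ i j = 1)
    (h01₂ : ∀ i j, A₂ i j = 0 ∨ A₂ i j = 1)
    (h01₁₂ : ∀ i j, A₁₂ i j = 0 ∨ A₁₂ i j = 1)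
    (hdiag₁ : ∀ i, A₁ i i = 0) (hdiag₂ : ∀ i, A₂ i i = 0)
    (m₁ m₂ m₁₂ : ℝ) (hm₁ : 1 ≤ m₁) (hm₂ : 1 ≤ m₂) (hm₁₂ : 1 ≤ m₁₂)
    (h2m₁ : ∑ i, ∑ j, A₁ i j = 2 * m₁)
    (h2m₂ : ∑ i, ∑ j, A₂ i j = 2 * m₂)
    (hm₁₂sum : ∑ i, ∑ j, A₁₂ i j = m₁₂)
    (e₁ : Fin n₁ → Fin K) (e₂ : Fin n₂ → Fin K)
    (B₁ : Matrix (Fin n₁) (Fin K) ℝ) (B₂ : Matrix (Fin n₂) (Fin K) ℝ)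
    (hB₁ : ∀ i k, B₁ i k = if e₁ i = k then 1 else 0)
    (hB₂ : ∀ j k, B₂ j k = if e₂ j = k then 1 else 0)
    (M₁ : Matrix (Fin n₁) (Fin n₁) ℝ) (M₂ : Matrix (Fin n₂) (Fin n₂) ℝ)
    (M₁₂ : Matrix (Fin n₁) (Fin n₂) ℝ)
    (hM₁ : ∀ i j, M₁ i j = A₁ i j - (∑ k, A₁ i k) * (∑ k, A₁ j k) / (2 * m₁))
    (hM₂ : ∀ i j, M₂ i j = A₂ i j - (∑ k, A₂ i k) * (∑ k, A₂ j k) / (2 * m₂))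
    (hM₁₂ : ∀ i j, M₁₂ i j = A₁₂ i j - (∑ k, A₁₂ i k) * (∑ k, A₁₂ k j) / m₁₂) :
    -1 ≤ (1 / 4) * ((1 / (2 * m₁)) * Matrix.trace (B₁.transpose * M₁ * B₁)
        + (2 / m₁₂) * Matrix.trace (B₁.transpose * M₁₂ * B₂)
        + (1 / (2 * m₂)) * Matrix.trace (B₂.transpose * M₂ * B₂)) ∧
    (1 / 4) * ((1 / (2 * m₁)) * Matrix.trace (B₁.transpose * M₁ * B₁)
        + (2 / m₁₂) * Matrix.trace (B₁.transpose * M₁₂ * B₂)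
        + (1 / (2 * m₂)) * Matrix.trace (B₂.transpose * M₂ * B₂)) ≤ 1 := by
  have hA₁ : ∀ i j, 0 ≤ A₁ i j := fun i j => by rcases h01₁ i j with h | h <;> simp [h]
  have hA₂ : ∀ i j, 0 ≤ A₂ i j := fun i j => by rcases h01₂ i j with h | h <;> simp [h]
  have hA₁₂ : ∀ i j, 0 ≤ A₁₂ i j := fun i j => by rcases h01₁₂ i j with h | h <;> simp [h]
  have hpm₁ : (0:ℝ) < 2 * m₁ := by linarith
  have hpm₂ : (0:ℝ) < 2 * m₂ := by linarith
  have hpm₁₂ : (0:ℝ) < m₁₂ := by linarith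
  -- rewrite M₁ with column sums
  have hM₁' : ∀ i j, M₁ i j = A₁ i j - (∑ k, A₁ i k) * (∑ k, A₁ k j) / (2 * m₁) := by
    intro i j; rw [hM₁ i j,
      show (∑ k, A₁ j k) = ∑ k, A₁ k j from Finset.sum_congr rfl fun k _ => hsym₁ j k]
  have hM₂' : ∀ i j, M₂ i j = A₂ i j - (∑ k, A₂ i k) * (∑ k, A₂ k j) / (2 * m₂) := by
    intro i j; rw [hM₂ i j,
      show (∑ k, A₂ j k) = ∑ k, A₂ k j from Finset.sum_congr rfl fun k _ => hsym₂ j k]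
  have t₁ := trace_assign M₁ e₁ e₁ B₁ B₁ hB₁ hB₁
  have t₂ := trace_assign M₁₂ e₁ e₂ B₁ B₂ hB₁ hB₂
  have t₃ := trace_assign M₂ e₂ e₂ B₂ B₂ hB₂ hB₂
  simp only [hM₁'] at t₁
  simp only [hM₁₂] at t₂
  simp only [hM₂'] at t₃
  have b₁ := mod_bound A₁ hA₁ (2 * m₁) hpm₁ h2m₁ (fun i j => e₁ i = e₁ j)
  have b₂ := mod_bound A₁₂ hA₁₂ m₁₂ hpm₁₂ hm₁₂sum (fun i j => e₁ i = e₂ j)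
  have b₃ := mod_bound A₂ hA₂ (2 * m₂) hpm₂ h2m₂ (fun i j => e₂ i = e₂ j)
  rw [← t₁] at b₁
  rw [← t₂] at b₂
  rw [← t₃] at b₃
  set T₁ := Matrix.trace (B₁.transpose * M₁ * B₁) with hT₁
  set T₂ := Matrix.trace (B₁.transpose * M₁₂ * B₂) with hT₂
  set T₃ := Matrix.trace (B₂.transpose * M₂ * B₂) with hT₃
  have u₁ : -1 ≤ (1 / (2 * m₁)) * T₁ ∧ (1 / (2 * m₁)) * T₁ ≤ 1 := by
    have e : (1 / (2 * m₁)) * (2 * m₁) = 1 := by field_simp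
    constructor
    · calc (-1:ℝ) = (1 / (2 * m₁)) * (-(2 * m₁)) := by rw [mul_neg, e]
        _ ≤ (1 / (2 * m₁)) * T₁ := mul_le_mul_of_nonneg_left b₁.1 (by positivity)
    · calc (1 / (2 * m₁)) * T₁ ≤ (1 / (2 * m₁)) * (2 * m₁) :=
          mul_le_mul_of_nonneg_left b₁.2 (by positivity)
        _ = 1 := e
  have u₂ : -2 ≤ (2 / m₁₂) * T₂ ∧ (2 / m₁₂) * T₂ ≤ 2 := by
    have e : (2 / m₁₂) * (m₁₂) = 2 := by field_simp
    constructor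
    · calc (-2:ℝ) = (2 / m₁₂) * (-(m₁₂)) := by rw [mul_neg, e]
        _ ≤ (2 / m₁₂) * T₂ := mul_le_mul_of_nonneg_left b₂.1 (by positivity)
    · calc (2 / m₁₂) * T₂ ≤ (2 / m₁₂) * (m₁₂) :=
          mul_le_mul_of_nonneg_left b₂.2 (by positivity)
        _ = 2 := e
  have u₃ : -1 ≤ (1 / (2 * m₂)) * T₃ ∧ (1 / (2 * m₂)) * T₃ ≤ 1 := by
    have e : (1 / (2 * m₂)) * (2 * m₂) = 1 := by field_simp
    constructor
    · calc (-1:ℝ) = (1 / (2 * m₂)) * (-(2 * m₂)) := by rw [mul_neg, e]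
        _ ≤ (1 / (2 * m₂)) * T₃ := mul_le_mul_of_nonneg_left b₃.1 (by positivity)
    · calc (1 / (2 * m₂)) * T₃ ≤ (1 / (2 * m₂)) * (2 * m₂) :=
          mul_le_mul_of_nonneg_left b₃.2 (by positivity)
        _ = 1 := e
  constructor <;> [linarith [u₁.1, u₂.1, u₃.1]; linarith [u₁.2, u₂.2, u₃.2]]
end

section
/- Let π ∈ ℝ^K be a probability vector with all entries positive and P a symmetric K×K matrix with positive entries. Define T_{ab} = π_a π_b P_{ab} / (Σ_{a,b} π_a π_b P_{ab}) and W = T − (T1)(T1)ᵀ. If K = 2 and W_{11} > 0, W_{22} > 0, W_{12} < 0, then P_{11} P_{22} > P_{12}². -/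
/-!
Writing `S = πᵀ P π`, the row sums of `T` are `π a (P π)_a / S`, so
`W₁₁ = π₁² (P₁₁ S - (P π)₁²) / S²`. For a symmetric `2 × 2` matrix, completing the square gives
`P₁₁ (πᵀ P π) = (P π)₁² + π₂² det P`, hence `W₁₁ = π₁² π₂² det P / S²`, and `W₁₁ > 0`
forces `det P > 0`.
-/

open Matrix

section Normalized

variable {n : Type*} [Fintype n] (π : n → ℝ) (P : Matrix n n ℝ)

theorem sum_sum_mul_mul_apply_eq_dotProduct_mulVec :
    ∑ a, ∑ b, π a * π b * P a b = π ⬝ᵥ P *ᵥ π := by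
  simp only [dotProduct, mulVec, Finset.mul_sum]
  exact Finset.sum_congr rfl fun a _ => Finset.sum_congr rfl fun b _ => by ring

theorem sum_mul_mul_apply_div (S : ℝ) (a : n) :
    ∑ c, π a * π c * P a c / S = π a * (P *ᵥ π) a / S := by
  simp only [mulVec, dotProduct, Finset.mul_sum, Finset.sum_div]
  exact Finset.sum_congr rfl fun c _ => by ring

theorem apply_self_sub_rowSum_mul_rowSum {S : ℝ} {T : Matrix n n ℝ}
    (hT : ∀ a b, T a b = π a * π b * P a b / S) (a : n) :
    T a a - (∑ c, T a c) * (∑ c, T a c)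
      = π a ^ 2 * (P a a * S - (P *ᵥ π) a ^ 2) / S ^ 2 := by
  simp only [hT, sum_mul_mul_apply_div]
  rcases eq_or_ne S 0 with rfl | hS
  · simp
  · field_simp

end Normalized

theorem Matrix.IsSymm.apply_zero_zero_mul_dotProduct_mulVec_fin_two {R : Type*} [CommRing R]
    {P : Matrix (Fin 2) (Fin 2) R} (hP : P.IsSymm) (v : Fin 2 → R) :
    P 0 0 * (v ⬝ᵥ P *ᵥ v) = (P *ᵥ v) 0 ^ 2 + v 1 ^ 2 * P.det := by
  simp only [det_fin_two, dotProduct, mulVec, Fin.sum_univ_two, hP.apply 0 1]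
  ring

theorem W_signs_imply_det_positive_general
    (π : Fin 2 → ℝ)
    (P : Matrix (Fin 2) (Fin 2) ℝ)
    (hPsym : ∀ a b, P a b = P b a)
    (S : ℝ) (hS : S = ∑ a, ∑ b, π a * π b * P a b)
    (T : Matrix (Fin 2) (Fin 2) ℝ)
    (hT : ∀ a b, T a b = π a * π b * P a b / S)
    (W : Matrix (Fin 2) (Fin 2) ℝ)
    (hW : ∀ a b, W a b = T a b - (∑ c, T a c) * (∑ c, T b c))
    (hW00 : 0 < W 0 0) :
    P 0 1 ^ 2 < P 0 0 * P 1 1 := by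
  have hP : P.IsSymm := IsSymm.ext fun a b => hPsym b a
  have hW00_eq : W 0 0 = π 0 ^ 2 * (π 1 ^ 2 * P.det) / S ^ 2 := by
    rw [hW, apply_self_sub_rowSum_mul_rowSum π P hT, hS,
      sum_sum_mul_mul_apply_eq_dotProduct_mulVec, hP.apply_zero_zero_mul_dotProduct_mulVec_fin_two,
      add_sub_cancel_left]
  have hdet : 0 < P.det := by
    by_contra! h
    refine hW00.not_ge (hW00_eq ▸ div_nonpos_of_nonpos_of_nonneg ?_ (sq_nonneg S))
    exact mul_nonpos_of_nonneg_of_nonpos (sq_nonneg _)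
      (mul_nonpos_of_nonneg_of_nonpos (sq_nonneg _) h)
  rwa [det_fin_two, ← hPsym 0 1, sub_pos, ← sq] at hdet

/-- For K = 2: positivity of the diagonal of W and negativity off-diagonal imply
P₁₁ P₂₂ > P₁₂². -/
theorem W_signs_imply_det_positive
    (π : Fin 2 → ℝ) (hπpos : ∀ a, 0 < π a) (hπsum : π 0 + π 1 = 1)
    (P : Matrix (Fin 2) (Fin 2) ℝ)
    (hPsym : ∀ a b, P a b = P b a) (hPpos : ∀ a b, 0 < P a b)
    (S : ℝ) (hS : S = ∑ a, ∑ b, π a * π b * P a b)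
    (T : Matrix (Fin 2) (Fin 2) ℝ)
    (hT : ∀ a b, T a b = π a * π b * P a b / S)
    (W : Matrix (Fin 2) (Fin 2) ℝ)
    (hW : ∀ a b, W a b = T a b - (∑ c, T a c) * (∑ c, T b c))
    (hW00 : 0 < W 0 0) (hW11 : 0 < W 1 1) (hW01 : W 0 1 < 0) :
    P 0 1 ^ 2 < P 0 0 * P 1 1 :=
  W_signs_imply_det_positive_general π P hPsym S hS T hT W hW hW00
end

section
/- Conversely for K = 2: if π ∈ ℝ² is a positive probability vector, P a 2×2 symmetric positive matrix with P_{11}P_{22} > P_{12}², T_{ab} = π_a π_b P_{ab}/(Σ π_a π_b P_{ab}), and W = T − (T1)(T1)ᵀ, then W_{11} > 0, W_{22} > 0 and W_{12} < 0. -/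
/-- Converse for K = 2: P₁₁ P₂₂ > P₁₂² implies W₁₁ > 0, W₂₂ > 0, W₁₂ < 0. -/
theorem det_positive_implies_W_signs
    (π : Fin 2 → ℝ) (hπpos : ∀ a, 0 < π a) (hπsum : π 0 + π 1 = 1)
    (P : Matrix (Fin 2) (Fin 2) ℝ)
    (hPsym : ∀ a b, P a b = P b a) (hPpos : ∀ a b, 0 < P a b)
    (hdet : P 0 1 ^ 2 < P 0 0 * P 1 1)
    (S : ℝ) (hS : S = ∑ a, ∑ b, π a * π b * P a b)
    (T : Matrix (Fin 2) (Fin 2) ℝ)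
    (hT : ∀ a b, T a b = π a * π b * P a b / S)
    (W : Matrix (Fin 2) (Fin 2) ℝ)
    (hW : ∀ a b, W a b = T a b - (∑ c, T a c) * (∑ c, T b c)) :
    0 < W 0 0 ∧ 0 < W 1 1 ∧ W 0 1 < 0 := by
  simp only [Fin.sum_univ_two] at hS hW
  have hS0 : 0 < S := by
    rw [hS]
    have := hπpos 0; have := hπpos 1
    have := hPpos 0 0; have := hPpos 0 1; have := hPpos 1 0; have := hPpos 1 1
    positivity
  have hsum : T 0 0 + T 0 1 + T 1 0 + T 1 1 = 1 := by
    rw [hT 0 0, hT 0 1, hT 1 0, hT 1 1]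
    field_simp
    rw [hS]; ring
  have h10 : T 1 0 = T 0 1 := by rw [hT 1 0, hT 0 1, hPsym 1 0]; ring_nf
  have hD : 0 < T 0 0 * T 1 1 - T 0 1 * T 0 1 := by
    rw [hT 0 0, hT 1 1, hT 0 1]
    rw [div_mul_div_comm, div_mul_div_comm, ← sub_div]
    apply div_pos _ (by positivity)
    have h0 := hπpos 0; have h1 := hπpos 1
    have : (π 0 * π 1)^2 * (P 0 1 ^ 2) < (π 0 * π 1)^2 * (P 0 0 * P 1 1) := by
      apply mul_lt_mul_of_pos_left hdet (by positivity)
    nlinarith [this]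
  rw [h10] at hsum
  refine ⟨?_, ?_, ?_⟩
  · rw [hW 0 0, show T 0 0 - (T 0 0 + T 0 1) * (T 0 0 + T 0 1)
        = T 0 0 * T 1 1 - T 0 1 * T 0 1 from by
      linear_combination (-(T 0 0)) * hsum]
    exact hD
  · rw [hW 1 1, h10, show T 1 1 - (T 0 1 + T 1 1) * (T 0 1 + T 1 1)
        = T 0 0 * T 1 1 - T 0 1 * T 0 1 from by
      linear_combination (-(T 1 1)) * hsum]
    exact hD
  · rw [hW 0 1, h10, show T 0 1 - (T 0 0 + T 0 1) * (T 0 1 + T 1 1)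
        = -(T 0 0 * T 1 1 - T 0 1 * T 0 1) from by
      linear_combination (-(T 0 1)) * hsum]
    linarith [hD]
end
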